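/- arXiv:quant-ph/0407255 — 3 statements merged into one kernel-verified Lean document; each statement's English description precedes it below -/
import Mathlib

section
/- Let G be a finite simple graph, Δ > 0, β > 0, and let H = −(Δ/2) • ∑_{u ∈ V} K_u be the cluster Hamiltonian. Then the Gibbs state equals a product over vertices: exp(−β • H) / trace(exp(−β • H)) = 2^{−|V|} • ∏_{u ∈ V} (1 + tanh(βΔ/2) • K_u). -/
/-!
Each `K_u` is an involution and the `K_u` commute: moving `X_w` past `Z_{N(u)}` costs the sign
`(-1)^[w ∈ N(u)]`, which is symmetric in `u, w` and trivial for `u = w`. Hence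
`exp (θ K_u) = cosh θ • (1 + tanh θ • K_u)`, and `exp (θ ∑_u K_u)` factorizes over the vertices.
For the normalization, `tr ∏_u (1 + t K_u) = 2^|V|`: peeling off one factor, `K_a` times the
product of the others anticommutes with the involution `Z_a`, so it is traceless.
-/

open Matrix

set_option linter.unusedSectionVars false

noncomputable section

namespace ClusterState


/-- The single-qubit Pauli `X` matrix. -/
def PX : Matrix (Fin 2) (Fin 2) ℂ := !![0, 1; 1, 0]

/-- The single-qubit Pauli `Z` matrix. -/
def PZ : Matrix (Fin 2) (Fin 2) ℂ := !![1, 0; 0, -1]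

variable {V : Type*} [Fintype V] [DecidableEq V]

/-- The one-qubit operator `M` acting on the tensor factor `u` of the
`|V|`-qubit space `(V → Fin 2)`, and the identity on all other factors. -/
def oneSite (u : V) (M : Matrix (Fin 2) (Fin 2) ℂ) :
    Matrix (V → Fin 2) (V → Fin 2) ℂ :=
  Matrix.of fun s t => if ∀ v, v ≠ u → s v = t v then M (s u) (t u) else 0

/-- Pauli `X` acting on tensor factor `u`. -/
def XAt (u : V) : Matrix (V → Fin 2) (V → Fin 2) ℂ := oneSite u PX

/-- Pauli `Z` acting on tensor factor `u`. -/
def ZAt (u : V) : Matrix (V → Fin 2) (V → Fin 2) ℂ := oneSite u PZ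

lemma fin2_cases : ∀ a : Fin 2, a = 0 ∨ a = 1 := by decide

lemma ZAt_eq_diagonal (u : V) :
    ZAt u = Matrix.diagonal fun s => if s u = 1 then (-1 : ℂ) else 1 := by
  funext s t
  simp only [ZAt, oneSite, Matrix.of_apply]
  by_cases hst : s = t
  · subst hst
    rw [Matrix.diagonal_apply_eq, if_pos fun v _ => rfl]
    rcases fin2_cases (s u) with h | h <;> rw [h] <;> norm_num [PZ]
  · rw [Matrix.diagonal_apply_ne _ hst]
    by_cases h : ∀ v, v ≠ u → s v = t v
    · rw [if_pos h]
      have hsu : s u ≠ t u := by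
        intro he
        exact hst (funext fun v => by
          by_cases hv : v = u
          · rw [hv]; exact he
          · exact h v hv)
      rcases fin2_cases (s u) with h1 | h1 <;> rcases fin2_cases (t u) with h2 | h2
      · exact absurd (h1.trans h2.symm) hsu
      · rw [h1, h2]; norm_num [PZ]
      · rw [h1, h2]; norm_num [PZ]
      · exact absurd (h1.trans h2.symm) hsu
    · rw [if_neg h]

lemma ZAt_commute (u w : V) : Commute (ZAt u) (ZAt w) := by
  have : ZAt u * ZAt w = ZAt w * ZAt u := by
    rw [ZAt_eq_diagonal, ZAt_eq_diagonal, Matrix.diagonal_mul_diagonal,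
      Matrix.diagonal_mul_diagonal]
    exact congrArg Matrix.diagonal (mul_comm _ _)
  exact this

/-- The product `∏_{u ∈ S} Z_u` of Pauli `Z` operators over a finite set of
sites (all factors commute). -/
def Zprod (S : Finset V) : Matrix (V → Fin 2) (V → Fin 2) ℂ :=
  S.noncommProd ZAt fun u _ w _ _ => ZAt_commute u w

/-- Flip the bit at site `u`. -/
def flip (u : V) (s : V → Fin 2) : V → Fin 2 := Function.update s u (s u + 1)

lemma flip_apply_same (u : V) (s : V → Fin 2) : flip u s u = s u + 1 := by
  unfold flip; exact Function.update_self u (s u + 1) s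

lemma flip_apply_ne (u v : V) (s : V → Fin 2) (h : v ≠ u) : flip u s v = s v := by
  unfold flip; exact Function.update_of_ne h (s u + 1) s

lemma XAt_apply (u : V) (s t : V → Fin 2) :
    XAt u s t = if t = flip u s then 1 else 0 := by
  simp only [XAt, oneSite, Matrix.of_apply]
  by_cases ht : t = flip u s
  · have hcond : ∀ v, v ≠ u → s v = t v := fun v hv => by
      rw [ht, flip_apply_ne u v s hv]
    rw [if_pos hcond, if_pos ht, ht, flip_apply_same]
    rcases fin2_cases (s u) with h | h <;> rw [h]
    · have e : (0 : Fin 2) + 1 = 1 := rfl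
      rw [e]; norm_num [PX]
    · have e : (1 : Fin 2) + 1 = 0 := rfl
      rw [e]; norm_num [PX]
  · rw [if_neg ht]
    by_cases h : ∀ v, v ≠ u → s v = t v
    · rw [if_pos h]
      have htu : t u ≠ s u + 1 := by
        intro he
        apply ht
        funext v
        by_cases hv : v = u
        · rw [hv, he, flip_apply_same]
        · rw [flip_apply_ne u v s hv]; exact (h v hv).symm
      have hts : t u = s u := by
        have key : ∀ a b : Fin 2, b ≠ a + 1 → b = a := by decide
        exact key (s u) (t u) htu
      rw [hts]
      rcases fin2_cases (s u) with h1 | h1 <;> rw [h1] <;> norm_num [PX]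
    · rw [if_neg h]

lemma XAt_mul_apply (u : V) (A : Matrix (V → Fin 2) (V → Fin 2) ℂ)
    (s t : V → Fin 2) : (XAt u * A) s t = A (flip u s) t := by
  rw [Matrix.mul_apply, Finset.sum_eq_single (flip u s)]
  · rw [XAt_apply, if_pos rfl, one_mul]
  · intro r _ hr
    rw [XAt_apply, if_neg hr, zero_mul]
  · intro h; exact absurd (Finset.mem_univ _) h

lemma flip_flip (u : V) (s : V → Fin 2) : flip u (flip u s) = s := by
  funext v
  by_cases hv : v = u
  · rw [hv, flip_apply_same, flip_apply_same]
    have key : ∀ a : Fin 2, a + 1 + 1 = a := by decide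
    exact key (s u)
  · rw [flip_apply_ne _ _ _ hv, flip_apply_ne _ _ _ hv]

lemma mul_XAt_apply (u : V) (A : Matrix (V → Fin 2) (V → Fin 2) ℂ)
    (s t : V → Fin 2) : (A * XAt u) s t = A s (flip u t) := by
  rw [Matrix.mul_apply, Finset.sum_eq_single (flip u t)]
  · rw [XAt_apply, if_pos (flip_flip u t).symm, mul_one]
  · intro r _ hr
    rw [XAt_apply, if_neg, mul_zero]
    intro he
    exact hr (by rw [he, flip_flip])
  · intro h; exact absurd (Finset.mem_univ _) h

lemma flip_comm (u w : V) (s : V → Fin 2) :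
    flip u (flip w s) = flip w (flip u s) := by
  rcases eq_or_ne u w with rfl | h
  · rfl
  · funext v
    by_cases hu : v = u
    · rw [hu, flip_apply_same, flip_apply_ne w u s h,
        flip_apply_ne w u (flip u s) h, flip_apply_same]
    · by_cases hw : v = w
      · rw [hw, flip_apply_ne u w (flip w s) (Ne.symm h), flip_apply_same,
          flip_apply_same, flip_apply_ne u w s (Ne.symm h)]
      · rw [flip_apply_ne u v (flip w s) hu, flip_apply_ne w v s hw,
          flip_apply_ne w v (flip u s) hw, flip_apply_ne u v s hu]

lemma XAt_commute (u w : V) : Commute (XAt u) (XAt w) := by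
  have : XAt u * XAt w = XAt w * XAt u := by
    funext s t
    rw [XAt_mul_apply, XAt_mul_apply, XAt_apply, XAt_apply, flip_comm w u s]
  exact this

/-- The product `∏_{u ∈ S} X_u` of Pauli `X` operators over a finite set of
sites (all factors commute). -/
def Xprod (S : Finset V) : Matrix (V → Fin 2) (V → Fin 2) ℂ :=
  S.noncommProd XAt fun u _ w _ _ => XAt_commute u w

/-- The cluster-state stabilizer operator `K_u = X_u * ∏_{v ∈ N(u)} Z_v`. -/
def K (G : SimpleGraph V) [DecidableRel G.Adj] (u : V) :
    Matrix (V → Fin 2) (V → Fin 2) ℂ :=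
  XAt u * Zprod (G.neighborFinset u)

/-- Product of a family of pairwise commuting elements over a finite set. -/
def cprod {α M : Type*} [Monoid M] (S : Finset α) (f : α → M)
    (h : ∀ u ∈ S, ∀ w ∈ S, Commute (f u) (f w)) : M :=
  S.noncommProd f fun u hu w hw _ => h u hu w hw

open scoped Function in
lemma noncommProd_smul_eq_pow_card_smul {ι R M : Type*} [CommMonoid R] [Monoid M] [MulAction R M]
    [IsScalarTower R M M] [SMulCommClass R M M] (s : Finset ι) (c : R) (f : ι → M)
    (comm : (s : Set ι).Pairwise (Commute on f)) :
    s.noncommProd (fun i => c • f i)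
        (fun _ hi _ hj hij => ((comm hi hj hij).smul_left c).smul_right c)
      = c ^ s.card • s.noncommProd f comm := by
  classical
  induction s using Finset.induction_on with
  | empty =>
    refine (Finset.noncommProd_empty _ _).trans ?_
    rw [Finset.noncommProd_empty, Finset.card_empty, pow_zero, one_smul]
  | insert a s ha ih =>
    refine (Finset.noncommProd_insert_of_notMem _ _ _ _ ha).trans ?_
    rw [Finset.noncommProd_insert_of_notMem _ _ f _ ha, ih (comm.mono (by simp)),
      smul_mul_smul_comm, Finset.card_insert_of_notMem ha, pow_succ']

lemma trace_mul_eq_zero_of_anticommute {n R : Type*} [Fintype n] [DecidableEq n] [CommRing R]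
    [IsAddTorsionFree R]
    {Z A M : Matrix n n R} (hZ : Z * Z = 1) (hZA : Z * A = -(A * Z)) (hZM : Commute Z M) :
    trace (A * M) = 0 := by
  have hconj : Z * (A * M) * Z = -(A * M) := calc
    Z * (A * M) * Z = Z * A * (M * Z) := by simp only [mul_assoc]
    _ = -(A * (Z * Z) * M) := by rw [hZA, ← hZM.eq, neg_mul]; simp only [mul_assoc]
    _ = -(A * M) := by rw [hZ, mul_one]
  have : trace (A * M) = -trace (A * M) := by
    rw [← trace_neg, ← hconj, trace_mul_cycle, hZ, one_mul]
  exact self_eq_neg.mp this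

lemma exp_smul_of_mul_self_eq_one {𝔸 : Type*} [Ring 𝔸] [Algebra ℝ 𝔸] [TopologicalSpace 𝔸]
    [IsTopologicalRing 𝔸] [ContinuousSMul ℝ 𝔸] [T2Space 𝔸] {A : 𝔸} (hA : A * A = 1) (x : ℝ) :
    NormedSpace.exp (x • A) = Real.cosh x • 1 + Real.sinh x • A := by
  rw [NormedSpace.exp_eq_tsum ℝ]
  refine HasSum.tsum_eq (HasSum.even_add_odd ?_ ?_)
  · convert (Real.hasSum_cosh x).smul_const (1 : 𝔸) using 2 with k
    rw [smul_pow, pow_mul A, sq A, hA, one_pow, smul_smul, div_eq_inv_mul]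
  · convert (Real.hasSum_sinh x).smul_const A using 2 with k
    rw [smul_pow, pow_succ A, pow_mul A, sq A, hA, one_pow, one_mul, smul_smul, div_eq_inv_mul]

def zSign (S : Finset V) (s : V → Fin 2) : ℂ := ∏ v ∈ S, if s v = 1 then -1 else 1

lemma zSign_flip (S : Finset V) (u : V) (s : V → Fin 2) :
    zSign S (flip u s) = (if u ∈ S then -1 else 1) * zSign S s := by
  have hrest : ∀ T : Finset V, u ∉ T → zSign T (flip u s) = zSign T s := fun T hT =>
    Finset.prod_congr rfl fun v hv => by rw [flip_apply_ne u v s (ne_of_mem_of_not_mem hv hT)]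
  by_cases hu : u ∈ S
  · rw [zSign, zSign, ← Finset.mul_prod_erase S _ hu, ← Finset.mul_prod_erase S _ hu, if_pos hu,
      ← zSign, ← zSign, hrest _ (Finset.notMem_erase u S), flip_apply_same, ← mul_assoc]
    rcases fin2_cases (s u) with h | h <;> simp [h]
  · rw [if_neg hu, one_mul, hrest S hu]

lemma zSign_mul_self (S : Finset V) (s : V → Fin 2) : zSign S s * zSign S s = 1 := by
  rw [zSign, ← Finset.prod_mul_distrib]
  exact Finset.prod_eq_one fun v _ => by split_ifs <;> norm_num

lemma Zprod_eq_diagonal (S : Finset V) : Zprod S = Matrix.diagonal (zSign S) := by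
  induction S using Finset.induction_on with
  | empty => exact (Finset.noncommProd_empty _ _).trans Matrix.diagonal_one.symm
  | insert a S ha ih =>
    refine (Finset.noncommProd_insert_of_notMem _ _ _ _ ha).trans ?_
    rw [← Zprod, ih, ZAt_eq_diagonal, Matrix.diagonal_mul_diagonal]
    congr 1
    funext s
    rw [zSign, zSign, Finset.prod_insert ha]

lemma Zprod_mul_self (S : Finset V) : Zprod S * Zprod S = 1 := by
  rw [Zprod_eq_diagonal, Matrix.diagonal_mul_diagonal, ← Matrix.diagonal_one]
  exact congrArg Matrix.diagonal (funext (zSign_mul_self S))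

lemma Zprod_commute (S T : Finset V) : Commute (Zprod S) (Zprod T) := by
  rw [Zprod_eq_diagonal, Zprod_eq_diagonal]
  exact Matrix.commute_diagonal _ _

lemma Zprod_singleton (v : V) : Zprod {v} = ZAt v := Finset.noncommProd_singleton v ZAt

lemma ZAt_mul_self (u : V) : ZAt u * ZAt u = 1 := by
  simpa only [Zprod_singleton] using Zprod_mul_self {u}

lemma XAt_mul_self (u : V) : XAt u * XAt u = 1 := by
  ext s t
  rw [XAt_mul_apply, XAt_apply, flip_flip, Matrix.one_apply]
  exact if_congr eq_comm rfl rfl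

lemma Zprod_mul_XAt (S : Finset V) (u : V) :
    Zprod S * XAt u = (if u ∈ S then -1 else 1 : ℂ) • (XAt u * Zprod S) := by
  ext s t
  rw [Matrix.smul_apply, mul_XAt_apply, XAt_mul_apply, Zprod_eq_diagonal,
    Matrix.diagonal_apply, Matrix.diagonal_apply, smul_eq_mul]
  by_cases hst : flip u s = t
  · subst hst
    rw [if_pos (flip_flip u s).symm, if_pos rfl, zSign_flip, ← mul_assoc]
    split_ifs <;> norm_num
  · rw [if_neg fun h => hst (by rw [h, flip_flip]), if_neg hst, mul_zero]

lemma ZAt_mul_XAt (v u : V) :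
    ZAt v * XAt u = (if u = v then -1 else 1 : ℂ) • (XAt u * ZAt v) := by
  simpa only [Zprod_singleton, Finset.mem_singleton] using Zprod_mul_XAt {v} u

section

variable (G : SimpleGraph V) [DecidableRel G.Adj]

lemma K_mul_K (u w : V) :
    K G u * K G w = (if G.Adj u w then -1 else 1 : ℂ) •
      (XAt u * XAt w * (Zprod (G.neighborFinset u) * Zprod (G.neighborFinset w))) := by
  rw [K, K, mul_assoc, ← mul_assoc (Zprod _), Zprod_mul_XAt, smul_mul_assoc, mul_smul_comm]
  simp only [G.mem_neighborFinset, mul_assoc]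

lemma K_mul_self (u : V) : K G u * K G u = 1 := by
  rw [K_mul_K, if_neg (G.irrefl (v := u)), one_smul, XAt_mul_self, Zprod_mul_self, one_mul]

lemma K_commute (u w : V) : Commute (K G u) (K G w) := by
  show K G u * K G w = K G w * K G u
  rw [K_mul_K, K_mul_K, (XAt_commute u w).eq, (Zprod_commute _ _).eq]
  simp only [G.adj_comm u w]

lemma ZAt_mul_K (u w : V) :
    ZAt u * K G w = (if w = u then -1 else 1 : ℂ) • (K G w * ZAt u) := by
  rw [K, ← mul_assoc, ZAt_mul_XAt, smul_mul_assoc, mul_assoc, ← Zprod_singleton u,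
    (Zprod_commute _ _).eq, ← mul_assoc]

lemma commute_one_add_smul_K (t : ℝ) (u w : V) :
    Commute (1 + t • K G u) (1 + t • K G w) := by
  have h : Commute (t • K G u) (t • K G w) := ((K_commute G u w).smul_left t).smul_right t
  exact (Commute.one_left _).add_left ((Commute.one_right _).add_right h)

lemma ZAt_mul_K_self (u : V) : ZAt u * K G u = -(K G u * ZAt u) := by
  rw [ZAt_mul_K, if_pos rfl, neg_one_smul]

lemma ZAt_commute_K {u w : V} (h : w ≠ u) : Commute (ZAt u) (K G w) := by
  show ZAt u * K G w = K G w * ZAt u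
  rw [ZAt_mul_K, if_neg h, one_smul]

lemma exp_smul_K (u : V) (x : ℝ) :
    NormedSpace.exp (x • K G u) = Real.cosh x • (1 + Real.tanh x • K G u) := by
  rw [exp_smul_of_mul_self_eq_one (K_mul_self G u), smul_add, smul_smul,
    Real.tanh_eq_sinh_div_cosh, mul_div_cancel₀ _ (Real.cosh_pos x).ne']

lemma exp_sum_smul_K (x : ℝ) (S : Finset V) :
    NormedSpace.exp (∑ u ∈ S, x • K G u) = Real.cosh x ^ S.card •
      cprod S (fun u => 1 + Real.tanh x • K G u) fun u _ w _ => commute_one_add_smul_K G _ u w := by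
  rw [Matrix.exp_sum_of_commute S (fun u => x • K G u)
    fun u _ w _ _ => ((K_commute G u w).smul_left x).smul_right x]
  refine (Finset.noncommProd_congr rfl (fun u _ => exp_smul_K G u x) _).trans ?_
  exact noncommProd_smul_eq_pow_card_smul S _ _ _

lemma trace_cprod_one_add_smul_K (t : ℝ) (S : Finset V) :
    trace (cprod S (fun u => 1 + t • K G u) fun u _ w _ => commute_one_add_smul_K G t u w)
      = 2 ^ Fintype.card V := by
  induction S using Finset.induction_on with
  | empty =>
    refine (congrArg trace (Finset.noncommProd_empty _ _)).trans ?_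
    rw [trace_one, Fintype.card_fun, Fintype.card_fin, Nat.cast_pow, Nat.cast_ofNat]
  | insert a S ha ih =>
    set P := cprod S (fun u => 1 + t • K G u) fun u _ w _ => commute_one_add_smul_K G t u w
    have hZP : Commute (ZAt a) P := Finset.noncommProd_commute _ _ _ _ fun w hw =>
      (Commute.one_right _).add_right ((ZAt_commute_K G (ne_of_mem_of_not_mem hw ha)).smul_right t)
    calc _ = trace ((1 + t • K G a) * P) :=
          congrArg trace (Finset.noncommProd_insert_of_notMem _ _ _ _ ha)
      _ = trace P + t • trace (K G a * P) := by
          rw [add_mul, one_mul, trace_add, smul_mul_assoc, trace_smul]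
      _ = 2 ^ Fintype.card V := by
          rw [trace_mul_eq_zero_of_anticommute (ZAt_mul_self a) (ZAt_mul_K_self G a) hZP,
            smul_zero, add_zero, ih]

end

theorem gibbs_state_eq_thermal_cluster_state_general
    {V : Type*} [Fintype V] [DecidableEq V]
    (G : SimpleGraph V) [DecidableRel G.Adj] (Δ β : ℝ)
    (H : Matrix (V → Fin 2) (V → Fin 2) ℂ)
    (hH : H = (-(Δ / 2) : ℝ) • ∑ u : V, K G u)
    (hc : ∀ u w : V,
      Commute ((1 : Matrix (V → Fin 2) (V → Fin 2) ℂ) + Real.tanh (β * Δ / 2) • K G u)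
        (1 + Real.tanh (β * Δ / 2) • K G w)) :
    (Matrix.trace (NormedSpace.exp ((-β : ℝ) • H)))⁻¹ • NormedSpace.exp ((-β : ℝ) • H)
      = ((2 : ℂ) ^ Fintype.card V)⁻¹ •
          cprod Finset.univ (fun u => 1 + Real.tanh (β * Δ / 2) • K G u)
            (fun u _ w _ => hc u w) := by
  have hexp : NormedSpace.exp ((-β : ℝ) • H) = Real.cosh (β * Δ / 2) ^ Fintype.card V •
      cprod Finset.univ (fun u => 1 + Real.tanh (β * Δ / 2) • K G u) (fun u _ w _ => hc u w) := by
    rw [hH, smul_smul, Finset.smul_sum, show -β * -(Δ / 2) = β * Δ / 2 by ring]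
    exact exp_sum_smul_K G _ Finset.univ
  have hcosh : (Real.cosh (β * Δ / 2) : ℂ) ^ Fintype.card V ≠ 0 :=
    pow_ne_zero _ (Complex.ofReal_ne_zero.mpr (Real.cosh_pos _).ne')
  rw [hexp, trace_smul, trace_cprod_one_add_smul_K G _ Finset.univ, ← Complex.coe_smul,
    ← Complex.coe_smul, smul_smul, smul_eq_mul, Complex.ofReal_pow]
  congr 1
  field_simp

/-- the Gibbs state of the cluster Hamiltonian
`H = −(Δ/2) ∑_u K_u` is `exp(−βH)/tr(exp(−βH)) = 2^{−|V|} ∏_u (1 + tanh(βΔ/2) K_u)`. -/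
theorem gibbs_state_eq_thermal_cluster_state
    {V : Type*} [Fintype V] [DecidableEq V]
    (G : SimpleGraph V) [DecidableRel G.Adj] (Δ β : ℝ) (hΔ : 0 < Δ) (hβ : 0 < β)
    (H : Matrix (V → Fin 2) (V → Fin 2) ℂ)
    (hH : H = (-(Δ / 2) : ℝ) • ∑ u : V, K G u)
    (hc : ∀ u w : V,
      Commute ((1 : Matrix (V → Fin 2) (V → Fin 2) ℂ) + Real.tanh (β * Δ / 2) • K G u)
        (1 + Real.tanh (β * Δ / 2) • K G w)) :
    (Matrix.trace (NormedSpace.exp ((-β : ℝ) • H)))⁻¹ • NormedSpace.exp ((-β : ℝ) • H)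
      = ((2 : ℂ) ^ Fintype.card V)⁻¹ •
          cprod Finset.univ (fun u => 1 + Real.tanh (β * Δ / 2) • K G u)
            (fun u _ w _ => hc u w) :=
  gibbs_state_eq_thermal_cluster_state_general G Δ β H hH hc

end ClusterState
end
end

section
/- (Peres criterion) Let ρ be a matrix on ℂ^n ⊗ ℂ^m (indexed by Fin n × Fin m) that is separable, i.e. there exist a finite index set I, nonnegative weights λ_i summing to 1, and density matrices σ_i on ℂ^n and τ_i on ℂ^m (Hermitian, positive semidefinite, trace one) with ρ = ∑_{i ∈ I} λ_i • σ_i ⊗ τ_i. Then the partial transpose of ρ on the second factor, defined by ρ^{T₂}[(a,b),(c,d)] = ρ[(a,d),(c,b)], is positive semidefinite. -/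
/-! The partial transpose of `∑ λᵢ σᵢ ⊗ τᵢ` is `∑ λᵢ σᵢ ⊗ τᵢᵀ`; transposition preserves
positivity, and nonnegative combinations of Kronecker products of positive semidefinite
matrices are positive semidefinite. -/

open Matrix Kronecker
open scoped ComplexOrder

noncomputable section

namespace ClusterState

/-- The partial transpose on the second tensor factor:
`M^{T₂}[(a,b),(c,d)] = M[(a,d),(c,b)]`. -/
def ptrans {n m : Type*} (M : Matrix (n × m) (n × m) ℂ) : Matrix (n × m) (n × m) ℂ :=
  Matrix.of fun p q => M (p.1, q.2) (q.1, p.2)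

section PartialTranspose

variable {n m : Type*}

theorem ptrans_kronecker (A : Matrix n n ℂ) (B : Matrix m m ℂ) :
    ptrans (A ⊗ₖ B) = A ⊗ₖ Bᵀ :=
  rfl

theorem ptrans_smul (r : ℝ) (M : Matrix (n × m) (n × m) ℂ) :
    ptrans (r • M) = r • ptrans M :=
  rfl

theorem ptrans_sum {ι : Type*} (s : Finset ι) (M : ι → Matrix (n × m) (n × m) ℂ) :
    ptrans (∑ i ∈ s, M i) = ∑ i ∈ s, ptrans (M i) := by
  ext p q
  simp only [ptrans, of_apply, Matrix.sum_apply]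

end PartialTranspose

theorem peres_criterion_general {n m : ℕ} (ρ : Matrix (Fin n × Fin m) (Fin n × Fin m) ℂ)
    (I : Type) [Fintype I] (lam : I → ℝ)
    (hlam : ∀ i, 0 ≤ lam i)
    (σ : I → Matrix (Fin n) (Fin n) ℂ) (τ : I → Matrix (Fin m) (Fin m) ℂ)
    (hσ : ∀ i, (σ i)ᴴ = σ i ∧ (σ i).PosSemidef ∧ (σ i).trace = 1)
    (hτ : ∀ i, (τ i)ᴴ = τ i ∧ (τ i).PosSemidef ∧ (τ i).trace = 1)
    (hρ : ρ = ∑ i, lam i • (σ i ⊗ₖ τ i)) :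
    (ptrans ρ).PosSemidef := by
  have hρT : ptrans ρ = ∑ i, lam i • (σ i ⊗ₖ (τ i)ᵀ) := by
    simp only [hρ, ptrans_sum, ptrans_smul, ptrans_kronecker]
  rw [hρT]
  exact posSemidef_sum _ fun i _ =>
    ((hσ i).2.1.kronecker (hτ i).2.1.transpose).smul (hlam i)

/-- Peres criterion: the partial transpose of a separable bipartite
state is positive semidefinite. -/
theorem peres_criterion {n m : ℕ} (ρ : Matrix (Fin n × Fin m) (Fin n × Fin m) ℂ)
    (I : Type) [Fintype I] (lam : I → ℝ)
    (hlam : ∀ i, 0 ≤ lam i) (hsum : ∑ i, lam i = 1)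
    (σ : I → Matrix (Fin n) (Fin n) ℂ) (τ : I → Matrix (Fin m) (Fin m) ℂ)
    (hσ : ∀ i, (σ i)ᴴ = σ i ∧ (σ i).PosSemidef ∧ (σ i).trace = 1)
    (hτ : ∀ i, (τ i)ᴴ = τ i ∧ (τ i).PosSemidef ∧ (τ i).trace = 1)
    (hρ : ρ = ∑ i, lam i • (σ i ⊗ₖ τ i)) :
    (ptrans ρ).PosSemidef :=
  peres_criterion_general ρ I lam hlam σ τ hσ hτ hρ

end ClusterState
end
end

section
/- For every ω ∈ ℝ with 0 ≤ ω ≤ 1, the bond state ρ(ω) is separable (a finite convex combination of Kronecker products of single-qubit density matrices) if and only if ω ≤ √2 − 1. -/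
open Matrix Kronecker
open scoped ComplexOrder

noncomputable section

namespace ClusterState

/-- The single-qubit Pauli `Y` matrix. -/
def PY : Matrix (Fin 2) (Fin 2) ℂ := !![0, -Complex.I; Complex.I, 0]

/-- The bond state `ρ(ω) = (1/4)(1 + ω X⊗Z)(1 + ω Z⊗X)`. -/
def bondState (ω : ℝ) : Matrix (Fin 2 × Fin 2) (Fin 2 × Fin 2) ℂ :=
  (4 : ℂ)⁻¹ • ((1 + ω • (PX ⊗ₖ PZ)) * (1 + ω • (PZ ⊗ₖ PX)))

/-- A two-qubit state is separable if it is a finite convex combination of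
Kronecker products of single-qubit density matrices. -/
def IsSeparable (ρ : Matrix (Fin 2 × Fin 2) (Fin 2 × Fin 2) ℂ) : Prop :=
  ∃ (k : ℕ) (lam : Fin k → ℝ) (σ τ : Fin k → Matrix (Fin 2) (Fin 2) ℂ),
    (∀ i, 0 ≤ lam i) ∧ (∑ i, lam i = 1) ∧
    (∀ i, (σ i)ᴴ = σ i ∧ (σ i).PosSemidef ∧ (σ i).trace = 1) ∧
    (∀ i, (τ i)ᴴ = τ i ∧ (τ i).PosSemidef ∧ (τ i).trace = 1) ∧
    ρ = ∑ i, lam i • (σ i ⊗ₖ τ i)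

/-!
Expanding the product, `4 ρ(ω) = 1 + ω X⊗Z + ω Z⊗X + ω² Y⊗Y`. For a traceless Hermitian
involution `P`, the matrices `(1 ± P)/2` are pure states, and averaging the two products
`(1 ± P)/2 ⊗ (1 ± Q)/2` gives `(1 + P⊗Q)/2`. Hence `ρ(ω)` is a convex combination of such
products and of the maximally mixed state `1/4`, the latter with weight `1 - 2ω - ω²`; this
weight is nonnegative exactly when `ω ≤ √2 - 1`.

Conversely, partial transposition fixes `X⊗Z` and `Z⊗X` but negates `Y⊗Y = (X⊗Z)(Z⊗X)`. On a
common eigenvector of `X⊗Z` and `Z⊗X` with eigenvalue `-1`, the partial transpose of `ρ(ω)`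
therefore acts as `(1 - 2ω - ω²)/4`, which Peres' criterion forces to be nonnegative.
-/

lemma PX_conjTranspose : PXᴴ = PX := by
  ext i j; fin_cases i <;> fin_cases j <;> simp [PX]

lemma PY_conjTranspose : PYᴴ = PY := by
  ext i j; fin_cases i <;> fin_cases j <;> simp [PY]

lemma PZ_conjTranspose : PZᴴ = PZ := by
  ext i j; fin_cases i <;> fin_cases j <;> simp [PZ]

lemma PX_transpose : PXᵀ = PX := by
  ext i j; fin_cases i <;> fin_cases j <;> rfl

lemma PY_transpose : PYᵀ = -PY := by
  ext i j; fin_cases i <;> fin_cases j <;> simp [PY]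

lemma PZ_transpose : PZᵀ = PZ := by
  ext i j; fin_cases i <;> fin_cases j <;> rfl

lemma PX_mul_self : PX * PX = 1 := by
  ext i j; fin_cases i <;> fin_cases j <;> simp [PX, mul_apply]

lemma PY_mul_self : PY * PY = 1 := by
  ext i j; fin_cases i <;> fin_cases j <;> simp [PY, mul_apply]

lemma PZ_mul_self : PZ * PZ = 1 := by
  ext i j; fin_cases i <;> fin_cases j <;> simp [PZ, mul_apply]

lemma PX_trace : PX.trace = 0 := by simp [PX, trace]

lemma PY_trace : PY.trace = 0 := by simp [PY, trace]

lemma PZ_trace : PZ.trace = 0 := by simp [PZ, trace]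

lemma PX_mul_PZ : PX * PZ = -Complex.I • PY := by
  ext i j; fin_cases i <;> fin_cases j <;> simp [PX, PY, PZ, mul_apply]

lemma PZ_mul_PX : PZ * PX = Complex.I • PY := by
  ext i j; fin_cases i <;> fin_cases j <;> simp [PX, PY, PZ, mul_apply]

lemma PX_kronecker_PZ_mul_PZ_kronecker_PX : (PX ⊗ₖ PZ) * (PZ ⊗ₖ PX) = PY ⊗ₖ PY := by
  rw [← mul_kronecker_mul, PX_mul_PZ, PZ_mul_PX, smul_kronecker, kronecker_smul, smul_smul]
  simp

lemma bondState_eq (ω : ℝ) : bondState ω =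
    (4 : ℂ)⁻¹ • (1 + ω • (PX ⊗ₖ PZ) + ω • (PZ ⊗ₖ PX) + ω ^ 2 • (PY ⊗ₖ PY)) := by
  simp only [bondState, add_mul, mul_add, one_mul, mul_one, smul_mul_smul_comm,
    PX_kronecker_PZ_mul_PZ_kronecker_PX]
  module

def IsDensityMatrix (σ : Matrix (Fin 2) (Fin 2) ℂ) : Prop :=
  σᴴ = σ ∧ σ.PosSemidef ∧ σ.trace = 1

lemma isDensityMatrix_half_smul_one : IsDensityMatrix ((2 : ℂ)⁻¹ • 1) :=
  ⟨by simp, PosSemidef.one.smul (by positivity), by simp [trace_smul]⟩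

section TracelessInvolution

variable {P : Matrix (Fin 2) (Fin 2) ℂ}

/-- `(1 + P)/2` is a Hermitian idempotent, hence of the form `Qᴴ Q`. -/
lemma isDensityMatrix_half_smul_one_add (hP : Pᴴ = P) (hPP : P * P = 1) (htr : P.trace = 0) :
    IsDensityMatrix ((2 : ℂ)⁻¹ • (1 + P)) := by
  set Q := (2 : ℂ)⁻¹ • (1 + P)
  have hQ : Qᴴ = Q := by simp [Q, conjTranspose_smul, hP]
  have hQQ : Qᴴ * Q = Q := by
    rw [hQ]
    simp only [Q, smul_mul_smul_comm, add_mul, mul_add, one_mul, mul_one, hPP]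
    module
  exact ⟨hQ, hQQ ▸ posSemidef_conjTranspose_mul_self Q, by simp [Q, trace_smul, trace_add, htr]⟩

lemma isDensityMatrix_half_smul_one_sub (hP : Pᴴ = P) (hPP : P * P = 1) (htr : P.trace = 0) :
    IsDensityMatrix ((2 : ℂ)⁻¹ • (1 - P)) := by
  rw [sub_eq_add_neg]
  exact isDensityMatrix_half_smul_one_add (by simp [hP]) (by simp [hPP]) (by simp [htr])

end TracelessInvolution

lemma half_smul_one_add_kronecker_add_half_smul_one_sub {m n : Type*} [DecidableEq m]
    [DecidableEq n] (P : Matrix m m ℂ) (Q : Matrix n n ℂ) :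
    ((2 : ℂ)⁻¹ • (1 + P)) ⊗ₖ ((2 : ℂ)⁻¹ • (1 + Q)) + ((2 : ℂ)⁻¹ • (1 - P)) ⊗ₖ ((2 : ℂ)⁻¹ • (1 - Q))
      = (2 : ℂ)⁻¹ • (1 + P ⊗ₖ Q) := by
  simp only [sub_eq_add_neg, ← neg_one_smul ℂ P, ← neg_one_smul ℂ Q, add_kronecker,
    kronecker_add, smul_kronecker, kronecker_smul, one_kronecker_one, smul_smul]
  module

lemma isSeparable_bondState {ω : ℝ} (h0 : 0 ≤ ω) (hω : 0 ≤ 1 - 2 * ω - ω ^ 2) :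
    IsSeparable (bondState ω) := by
  have hXp := isDensityMatrix_half_smul_one_add PX_conjTranspose PX_mul_self PX_trace
  have hXm := isDensityMatrix_half_smul_one_sub PX_conjTranspose PX_mul_self PX_trace
  have hYp := isDensityMatrix_half_smul_one_add PY_conjTranspose PY_mul_self PY_trace
  have hYm := isDensityMatrix_half_smul_one_sub PY_conjTranspose PY_mul_self PY_trace
  have hZp := isDensityMatrix_half_smul_one_add PZ_conjTranspose PZ_mul_self PZ_trace
  have hZm := isDensityMatrix_half_smul_one_sub PZ_conjTranspose PZ_mul_self PZ_trace
  have hI := isDensityMatrix_half_smul_one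
  refine ⟨7, ![1 - 2 * ω - ω ^ 2, ω / 2, ω / 2, ω / 2, ω / 2, ω ^ 2 / 2, ω ^ 2 / 2],
    ![(2 : ℂ)⁻¹ • 1, (2 : ℂ)⁻¹ • (1 + PX), (2 : ℂ)⁻¹ • (1 - PX), (2 : ℂ)⁻¹ • (1 + PZ),
      (2 : ℂ)⁻¹ • (1 - PZ), (2 : ℂ)⁻¹ • (1 + PY), (2 : ℂ)⁻¹ • (1 - PY)],
    ![(2 : ℂ)⁻¹ • 1, (2 : ℂ)⁻¹ • (1 + PZ), (2 : ℂ)⁻¹ • (1 - PZ), (2 : ℂ)⁻¹ • (1 + PX),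
      (2 : ℂ)⁻¹ • (1 - PX), (2 : ℂ)⁻¹ • (1 + PY), (2 : ℂ)⁻¹ • (1 - PY)],
    fun i => ?_, ?_, fun i => ?_, fun i => ?_, ?_⟩
  · fin_cases i <;> simp [hω] <;> positivity
  · simp only [Fin.sum_univ_seven, Matrix.cons_val]
    ring
  · fin_cases i <;> assumption
  · fin_cases i <;> assumption
  · calc bondState ω
        = (1 - 2 * ω - ω ^ 2) • (((2 : ℂ)⁻¹ • 1) ⊗ₖ ((2 : ℂ)⁻¹ • 1))
          + (ω / 2) • (((2 : ℂ)⁻¹ • (1 + PX)) ⊗ₖ ((2 : ℂ)⁻¹ • (1 + PZ))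
            + ((2 : ℂ)⁻¹ • (1 - PX)) ⊗ₖ ((2 : ℂ)⁻¹ • (1 - PZ)))
          + (ω / 2) • (((2 : ℂ)⁻¹ • (1 + PZ)) ⊗ₖ ((2 : ℂ)⁻¹ • (1 + PX))
            + ((2 : ℂ)⁻¹ • (1 - PZ)) ⊗ₖ ((2 : ℂ)⁻¹ • (1 - PX)))
          + (ω ^ 2 / 2) • (((2 : ℂ)⁻¹ • (1 + PY)) ⊗ₖ ((2 : ℂ)⁻¹ • (1 + PY))
            + ((2 : ℂ)⁻¹ • (1 - PY)) ⊗ₖ ((2 : ℂ)⁻¹ • (1 - PY))) := by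
          rw [half_smul_one_add_kronecker_add_half_smul_one_sub,
            half_smul_one_add_kronecker_add_half_smul_one_sub,
            half_smul_one_add_kronecker_add_half_smul_one_sub, bondState_eq]
          simp only [smul_kronecker, kronecker_smul, one_kronecker_one, smul_smul]
          module
      _ = _ := by simp [Fin.sum_univ_seven, smul_add, add_assoc]

section PartialTranspose

variable {R m n : Type*}

def partialTranspose (M : Matrix (m × n) (m × n) R) : Matrix (m × n) (m × n) R :=
  of fun p q => M (p.1, q.2) (q.1, p.2)

lemma partialTranspose_kronecker [Mul R] (A : Matrix m m R) (B : Matrix n n R) :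
    partialTranspose (A ⊗ₖ B) = A ⊗ₖ Bᵀ := by
  ext; rfl

lemma partialTranspose_smul {S : Type*} [SMul S R] (c : S) (M : Matrix (m × n) (m × n) R) :
    partialTranspose (c • M) = c • partialTranspose M := by
  ext; rfl

lemma partialTranspose_add [Add R] (M N : Matrix (m × n) (m × n) R) :
    partialTranspose (M + N) = partialTranspose M + partialTranspose N := by
  ext; rfl

lemma partialTranspose_sum [AddCommMonoid R] {ι : Type*} (s : Finset ι)
    (M : ι → Matrix (m × n) (m × n) R) :
    partialTranspose (∑ i ∈ s, M i) = ∑ i ∈ s, partialTranspose (M i) := by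
  ext
  simp [partialTranspose, Matrix.sum_apply]

end PartialTranspose

/-- Peres' criterion. -/
lemma IsSeparable.posSemidef_partialTranspose {ρ : Matrix (Fin 2 × Fin 2) (Fin 2 × Fin 2) ℂ}
    (h : IsSeparable ρ) : (partialTranspose ρ).PosSemidef := by
  obtain ⟨k, lam, σ, τ, hlam, -, hσ, hτ, rfl⟩ := h
  rw [partialTranspose_sum]
  refine posSemidef_sum _ fun i _ => ?_
  rw [partialTranspose_smul, partialTranspose_kronecker]
  exact ((hσ i).2.1.kronecker (hτ i).2.1.transpose).smul (hlam i)

lemma partialTranspose_bondState (ω : ℝ) : partialTranspose (bondState ω) =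
    (4 : ℂ)⁻¹ • (1 + ω • (PX ⊗ₖ PZ) + ω • (PZ ⊗ₖ PX) - ω ^ 2 • (PY ⊗ₖ PY)) := by
  rw [bondState_eq, ← one_kronecker_one]
  simp only [partialTranspose_smul, partialTranspose_add, partialTranspose_kronecker,
    transpose_one, PX_transpose, PZ_transpose, PY_transpose, ← neg_one_smul ℂ PY, kronecker_smul]
  module

def bondWitness : Fin 2 × Fin 2 → ℂ := fun p => if p = (0, 0) then 1 else -1

lemma PX_kronecker_PZ_mulVec_bondWitness : (PX ⊗ₖ PZ) *ᵥ bondWitness = -bondWitness := by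
  ext ⟨i, j⟩
  fin_cases i <;> fin_cases j <;>
    simp [bondWitness, PX, PZ, mulVec, dotProduct, Fintype.sum_prod_type]

lemma PZ_kronecker_PX_mulVec_bondWitness : (PZ ⊗ₖ PX) *ᵥ bondWitness = -bondWitness := by
  ext ⟨i, j⟩
  fin_cases i <;> fin_cases j <;>
    simp [bondWitness, PX, PZ, mulVec, dotProduct, Fintype.sum_prod_type]

lemma partialTranspose_bondState_mulVec_bondWitness (ω : ℝ) :
    partialTranspose (bondState ω) *ᵥ bondWitness
      = ((1 - 2 * ω - ω ^ 2) / 4 : ℝ) • bondWitness := by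
  rw [partialTranspose_bondState, ← PX_kronecker_PZ_mul_PZ_kronecker_PX]
  simp only [smul_mulVec, add_mulVec, sub_mulVec, one_mulVec, ← mulVec_mulVec,
    PX_kronecker_PZ_mulVec_bondWitness, PZ_kronecker_PX_mulVec_bondWitness, mulVec_neg, neg_neg]
  module

lemma one_sub_two_mul_sub_sq_nonneg_of_isSeparable {ω : ℝ} (h : IsSeparable (bondState ω)) :
    0 ≤ 1 - 2 * ω - ω ^ 2 := by
  have hv := h.posSemidef_partialTranspose.dotProduct_mulVec_nonneg bondWitness
  have hnorm : star bondWitness ⬝ᵥ bondWitness = 4 := by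
    norm_num [bondWitness, dotProduct, Fintype.sum_prod_type]
  rw [partialTranspose_bondState_mulVec_bondWitness, dotProduct_smul, hnorm, Complex.real_smul,
    ← Complex.ofReal_ofNat, ← Complex.ofReal_mul, Complex.zero_le_real] at hv
  linarith

lemma one_sub_two_mul_sub_sq_nonneg_iff {ω : ℝ} (h0 : 0 ≤ ω) :
    0 ≤ 1 - 2 * ω - ω ^ 2 ↔ ω ≤ √2 - 1 := by
  rw [show 1 - 2 * ω - ω ^ 2 = 2 - (ω + 1) ^ 2 by ring, sub_nonneg, le_sub_iff_add_le,
    Real.le_sqrt (by linarith) zero_le_two]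

theorem bondState_separable_iff_general (ω : ℝ) (h0 : 0 ≤ ω) :
    IsSeparable (bondState ω) ↔ ω ≤ Real.sqrt 2 - 1 := by
  rw [← one_sub_two_mul_sub_sq_nonneg_iff h0]
  exact ⟨one_sub_two_mul_sub_sq_nonneg_of_isSeparable, isSeparable_bondState h0⟩

/-- for `0 ≤ ω ≤ 1` the bond state is separable iff `ω ≤ √2 − 1`. -/
theorem bondState_separable_iff (ω : ℝ) (h0 : 0 ≤ ω) (h1 : ω ≤ 1) :
    IsSeparable (bondState ω) ↔ ω ≤ Real.sqrt 2 - 1 :=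
  bondState_separable_iff_general ω h0

end ClusterState
end
end
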